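/- For any real 0 < α ≤ 1 and every n ≥ 1, the Sylvester sequence satisfies s_n(α) ≥ s_n(1), where s_n(1) is the Sylvester sequence of 1 (i.e., 2, 3, 7, 43, …). Consequently s_n(α) ≥ (n−1)! + 1. -/

import Mathlib

/-!
Write `R_n = α - ∑_{j<n} 1/s_j(α)` for the remainder, so that `s_n = ⌊1/R_n⌋ + 1`. When
`0 < R_n ≤ 1` the greedy choice gives `1/s_n < R_n ≤ 1/(s_n - 1)`, hence
`0 < R_{n+1} ≤ 1/(s_n - 1) - 1/s_n = 1/(s_n (s_n - 1))` and `s_{n+1} ≥ s_n (s_n - 1) + 1`.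
For `α = 1` the remainder is exactly `1/(s_n - 1)`, so the recursion holds with equality.
Since `x ↦ x (x - 1) + 1` is monotone for `x ≥ 1`, induction gives `s_n(1) ≤ s_n(α)`, and
`s_n(1) ≥ n! + 1` follows from the recursion and `n + 1 ≤ n! + 1`.
-/

/-- The Sylvester sequence of `α`: `sylv α n` is the `(n+1)`-st term `s_{n+1}(α)`,
the least integer strictly greater than the reciprocal of the remainder
`α - 1/s_1 - ⋯ - 1/s_n`. -/
noncomputable def sylv (α : ℝ) : ℕ → ℤ
  | 0 => ⌊1/α⌋ + 1
  | n + 1 => ⌊(α - ∑ j ∈ (Finset.range (n+1)).attach, (1:ℝ)/(sylv α j.1))⁻¹⌋ + 1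
decreasing_by exact Finset.mem_range.mp j.2

section FloorInv

variable {K : Type*} [Field K] [LinearOrder K] [IsStrictOrderedRing K] [FloorRing K] {R : K}

lemma one_le_floor_inv (h0 : 0 < R) (h1 : R ≤ 1) : 1 ≤ ⌊R⁻¹⌋ :=
  Int.le_floor.mpr (by simpa using one_le_inv_iff₀.mpr ⟨h0, h1⟩)

lemma inv_floor_inv_add_one_lt (h0 : 0 < R) : ((⌊R⁻¹⌋ : K) + 1)⁻¹ < R :=
  (inv_lt_comm₀ (by positivity) h0).mpr (Int.lt_floor_add_one _)

lemma le_inv_floor_inv (h0 : 0 < R) (h1 : R ≤ 1) : R ≤ (⌊R⁻¹⌋ : K)⁻¹ := by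
  have hm : (1 : K) ≤ ⌊R⁻¹⌋ := by exact_mod_cast one_le_floor_inv h0 h1
  exact (le_inv_comm₀ (by linarith) h0).mp (Int.floor_le _)

end FloorInv

lemma inv_sub_one_sub_inv {K : Type*} [Field K] {x : K} (h0 : x ≠ 0) (h1 : x - 1 ≠ 0) :
    (x - 1)⁻¹ - x⁻¹ = (x * (x - 1))⁻¹ := by
  field_simp
  ring

noncomputable def sylvRem (α : ℝ) (n : ℕ) : ℝ := α - ∑ j ∈ Finset.range n, (1 : ℝ) / sylv α j

lemma sylvRem_zero (α : ℝ) : sylvRem α 0 = α := by simp [sylvRem]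

lemma sylvRem_succ (α : ℝ) (n : ℕ) : sylvRem α (n + 1) = sylvRem α n - (sylv α n : ℝ)⁻¹ := by
  rw [sylvRem, sylvRem, Finset.sum_range_succ, one_div]
  ring

lemma sylv_eq_floor_inv_sylvRem (α : ℝ) (n : ℕ) : sylv α n = ⌊(sylvRem α n)⁻¹⌋ + 1 := by
  cases n with
  | zero => simp [sylv, sylvRem]
  | succ n => rw [sylv, sylvRem, Finset.sum_attach (Finset.range (n + 1)) fun j ↦ 1 / (sylv α j : ℝ)]

lemma cast_sylv (α : ℝ) (n : ℕ) : (sylv α n : ℝ) = ⌊(sylvRem α n)⁻¹⌋ + 1 := by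
  exact_mod_cast sylv_eq_floor_inv_sylvRem α n

section Remainder

variable {α : ℝ}

lemma sylvRem_pos (hα : 0 < α) (n : ℕ) : 0 < sylvRem α n := by
  induction n with
  | zero => rwa [sylvRem_zero]
  | succ n ih =>
    rw [sylvRem_succ, cast_sylv, sub_pos]
    exact inv_floor_inv_add_one_lt ih

lemma sylvRem_le_one (hα0 : 0 < α) (hα1 : α ≤ 1) (n : ℕ) : sylvRem α n ≤ 1 := by
  have hanti : Antitone (sylvRem α) := antitone_nat_of_succ_le fun n ↦ by
    have hs : (0 : ℝ) ≤ ⌊(sylvRem α n)⁻¹⌋ := by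
      exact_mod_cast Int.floor_nonneg.mpr (inv_nonneg.mpr (sylvRem_pos hα0 n).le)
    rw [sylvRem_succ, cast_sylv, sub_le_self_iff]
    positivity
  exact (hanti (Nat.zero_le n)).trans ((sylvRem_zero α).trans_le hα1)

lemma two_le_sylv (hα0 : 0 < α) (hα1 : α ≤ 1) (n : ℕ) : 2 ≤ sylv α n := by
  have := one_le_floor_inv (sylvRem_pos hα0 n) (sylvRem_le_one hα0 hα1 n)
  rw [sylv_eq_floor_inv_sylvRem]
  omega

lemma sylvRem_succ_le (hα0 : 0 < α) (hα1 : α ≤ 1) (n : ℕ) :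
    sylvRem α (n + 1) ≤ ((sylv α n : ℝ) * (sylv α n - 1))⁻¹ := by
  have hs : (2 : ℝ) ≤ sylv α n := by exact_mod_cast two_le_sylv hα0 hα1 n
  have hR : sylvRem α n ≤ ((sylv α n : ℝ) - 1)⁻¹ := by
    rw [cast_sylv, add_sub_cancel_right]
    exact le_inv_floor_inv (sylvRem_pos hα0 n) (sylvRem_le_one hα0 hα1 n)
  rw [sylvRem_succ, ← inv_sub_one_sub_inv (by linarith) (by linarith)]
  linarith

lemma sylv_mul_sylv_sub_one_add_one_le (hα0 : 0 < α) (hα1 : α ≤ 1) (n : ℕ) :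
    sylv α n * (sylv α n - 1) + 1 ≤ sylv α (n + 1) := by
  have hs : (2 : ℝ) ≤ sylv α n := by exact_mod_cast two_le_sylv hα0 hα1 n
  have hinv : (sylv α n : ℝ) * (sylv α n - 1) ≤ (sylvRem α (n + 1))⁻¹ :=
    (le_inv_comm₀ (sylvRem_pos hα0 _) (by nlinarith)).mp (sylvRem_succ_le hα0 hα1 n)
  rw [sylv_eq_floor_inv_sylvRem α (n + 1), add_le_add_iff_right]
  exact Int.le_floor.mpr (by exact_mod_cast hinv)

end Remainder

lemma sylv_one_zero : sylv 1 0 = 2 := by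
  norm_num [sylv_eq_floor_inv_sylvRem, sylvRem_zero]

lemma sylvRem_one_succ {n : ℕ} (h : sylvRem 1 n = ((sylv 1 n : ℝ) - 1)⁻¹) :
    sylvRem 1 (n + 1) = ((sylv 1 n : ℝ) * (sylv 1 n - 1))⁻¹ := by
  have hs : (2 : ℝ) ≤ sylv 1 n := by exact_mod_cast two_le_sylv one_pos le_rfl n
  rw [sylvRem_succ, h, inv_sub_one_sub_inv (by linarith) (by linarith)]

lemma sylv_one_succ_of_sylvRem_eq {n : ℕ} (h : sylvRem 1 n = ((sylv 1 n : ℝ) - 1)⁻¹) :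
    sylv 1 (n + 1) = sylv 1 n * (sylv 1 n - 1) + 1 := by
  rw [sylv_eq_floor_inv_sylvRem, sylvRem_one_succ h, inv_inv]
  exact_mod_cast congrArg (· + 1) (Int.floor_intCast (sylv 1 n * (sylv 1 n - 1)))

lemma sylvRem_one (n : ℕ) : sylvRem 1 n = ((sylv 1 n : ℝ) - 1)⁻¹ := by
  induction n with
  | zero => norm_num [sylvRem_zero, sylv_one_zero]
  | succ n ih =>
    rw [sylvRem_one_succ ih, sylv_one_succ_of_sylvRem_eq ih]
    push_cast
    ring_nf

lemma sylv_one_succ (n : ℕ) : sylv 1 (n + 1) = sylv 1 n * (sylv 1 n - 1) + 1 :=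
  sylv_one_succ_of_sylvRem_eq (sylvRem_one n)

lemma sylv_one_le_sylv {α : ℝ} (hα0 : 0 < α) (hα1 : α ≤ 1) (n : ℕ) : sylv 1 n ≤ sylv α n := by
  induction n with
  | zero => exact sylv_one_zero ▸ two_le_sylv hα0 hα1 0
  | succ n ih =>
    have h1 := two_le_sylv one_pos le_rfl n
    rw [sylv_one_succ]
    refine le_trans ?_ (sylv_mul_sylv_sub_one_add_one_le hα0 hα1 n)
    gcongr <;> omega

lemma factorial_add_one_le_sylv_one (n : ℕ) : (n.factorial : ℤ) + 1 ≤ sylv 1 n := by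
  induction n with
  | zero => norm_num [sylv_one_zero]
  | succ n ih =>
    have hn : (n : ℤ) ≤ n.factorial := by exact_mod_cast Nat.self_le_factorial n
    rw [sylv_one_succ, Nat.factorial_succ]
    push_cast
    nlinarith

theorem sylvester_ge_sylvester_one (α : ℝ) (hα0 : 0 < α) (hα1 : α ≤ 1) (n : ℕ) :
    sylv 1 n ≤ sylv α n ∧ (n.factorial : ℤ) + 1 ≤ sylv α n := by
  have h := sylv_one_le_sylv hα0 hα1 n
  exact ⟨h, (factorial_add_one_le_sylv_one n).trans h⟩
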